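/- arXiv:1704.05798 — 2 statements merged into one kernel-verified Lean document; each statement's English description precedes it below -/
import Mathlib

section
/- If a ternary signature with coefficients a₀,...,a₇ satisfies (a₀a₇ − a₂a₅ + a₁a₆ − a₃a₄)² − 4(a₂a₄ − a₀a₆)(a₃a₅ − a₁a₇) = 0, a₀a₃ = a₁a₂, a₅a₆ = a₄a₇, a₁a₄ = a₀a₅, a₃a₆ = a₂a₇, a₃a₅ = a₁a₇, and a₂a₄ = a₀a₆, then the signature is not genuinely entangled, i.e., it factors as a tensor product where at least one factor is a unary signature (a vector in ℂ²). -/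
/-!
Read the signature as the `2 × 4` matrix with rows indexed by the first bit and columns by the
last two; it factors as `u ⊗ w` exactly when all six `2 × 2` minors `m_pq` of this matrix vanish.
Naming the columns `a, b, c, d`, four minors vanish by hypothesis, and the GHZ polynomial is
`(m_ad + m_bc)² - 4 m_ac m_bd`. Since `m_ac = 0`, its vanishing gives `m_ad + m_bc = 0`, while the
Plücker relation `m_ab m_cd - m_ac m_bd + m_ad m_bc = 0` gives `m_ad m_bc = 0`; hence the last two
minors vanish too.
-/

section TwoMinor

variable {R ι : Type*}

def twoMinor [CommRing R] (M : Fin 2 → ι → R) (a b : ι) : R :=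
  M 0 a * M 1 b - M 0 b * M 1 a

section CommRing

variable [CommRing R] (M : Fin 2 → ι → R)

theorem twoMinor_self (a : ι) : twoMinor M a a = 0 :=
  sub_self _

theorem twoMinor_antisymm (a b : ι) : twoMinor M a b = -twoMinor M b a := by
  unfold twoMinor; ring

theorem twoMinor_plucker (a b c d : ι) :
    twoMinor M a b * twoMinor M c d - twoMinor M a c * twoMinor M b d
      + twoMinor M a d * twoMinor M b c = 0 := by
  unfold twoMinor; ring

theorem twoMinor_eq_zero_of_ghz_eq_zero [NoZeroDivisors R] {a b c d : ι}
    (hghz : (twoMinor M a d + twoMinor M b c) ^ 2 - 4 * twoMinor M a c * twoMinor M b d = 0)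
    (hab : twoMinor M a b = 0) (hac : twoMinor M a c = 0) :
    twoMinor M a d = 0 ∧ twoMinor M b c = 0 := by
  have hsum : twoMinor M a d + twoMinor M b c = 0 :=
    pow_eq_zero_iff two_ne_zero |>.mp <| by linear_combination hghz + 4 * twoMinor M b d * hac
  have hprod : twoMinor M a d * twoMinor M b c = 0 := by
    linear_combination twoMinor_plucker M a b c d - twoMinor M c d * hab + twoMinor M b d * hac
  have had : twoMinor M a d = 0 :=
    mul_self_eq_zero.mp <| by linear_combination twoMinor M a d * hsum - hprod
  exact ⟨had, by linear_combination hsum - had⟩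

theorem forall_twoMinor_eq_zero_of_pairs {M : Fin 2 → Fin 2 × Fin 2 → R}
    (hab : twoMinor M (0, 0) (0, 1) = 0) (hac : twoMinor M (0, 0) (1, 0) = 0)
    (had : twoMinor M (0, 0) (1, 1) = 0) (hbc : twoMinor M (0, 1) (1, 0) = 0)
    (hbd : twoMinor M (0, 1) (1, 1) = 0) (hcd : twoMinor M (1, 0) (1, 1) = 0) :
    ∀ p q, twoMinor M p q = 0 := by
  simp only [Prod.forall, Fin.forall_fin_two]
  and_intros <;>
    first
      | exact twoMinor_self M _
      | assumption
      | (rw [twoMinor_antisymm, neg_eq_zero]; assumption)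

end CommRing

theorem exists_mul_of_forall_twoMinor_eq_zero [Field R] {M : Fin 2 → ι → R}
    (h : ∀ a b, twoMinor M a b = 0) :
    ∃ (u : Fin 2 → R) (w : ι → R), ∀ i a, M i a = u i * w a := by
  by_cases hzero : ∀ a, M 0 a = 0
  · exact ⟨![0, 1], M 1, fun i a => by fin_cases i <;> simp [hzero]⟩
  push Not at hzero
  obtain ⟨a₀, ha₀⟩ := hzero
  refine ⟨![1, M 1 a₀ / M 0 a₀], M 0, fun i a => ?_⟩
  fin_cases i
  · simp
  · simp only [Fin.mk_one, Matrix.cons_val_one, Matrix.cons_val_zero]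
    have hminor := h a₀ a
    unfold twoMinor at hminor
    field_simp
    linear_combination hminor

end TwoMinor

theorem not_genuinely_entangled_of_conditions_general (ψ : Fin 2 → Fin 2 → Fin 2 → ℂ)
    (hpoly : (ψ 0 0 0 * ψ 1 1 1 - ψ 0 1 0 * ψ 1 0 1 + ψ 0 0 1 * ψ 1 1 0 - ψ 0 1 1 * ψ 1 0 0) ^ 2
      - 4 * (ψ 0 1 0 * ψ 1 0 0 - ψ 0 0 0 * ψ 1 1 0) * (ψ 0 1 1 * ψ 1 0 1 - ψ 0 0 1 * ψ 1 1 1) = 0)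
    (h3 : ψ 0 0 1 * ψ 1 0 0 = ψ 0 0 0 * ψ 1 0 1)
    (h4 : ψ 0 1 1 * ψ 1 1 0 = ψ 0 1 0 * ψ 1 1 1)
    (h5 : ψ 0 1 1 * ψ 1 0 1 = ψ 0 0 1 * ψ 1 1 1)
    (h6 : ψ 0 1 0 * ψ 1 0 0 = ψ 0 0 0 * ψ 1 1 0) :
    (∃ (u : Fin 2 → ℂ) (w : Fin 2 → Fin 2 → ℂ), ∀ i j k, ψ i j k = u i * w j k) ∨
    (∃ (u : Fin 2 → ℂ) (w : Fin 2 → Fin 2 → ℂ), ∀ i j k, ψ i j k = u j * w i k) ∨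
    (∃ (u : Fin 2 → ℂ) (w : Fin 2 → Fin 2 → ℂ), ∀ i j k, ψ i j k = u k * w i j) := by
  set M : Fin 2 → Fin 2 × Fin 2 → ℂ := fun i p => ψ i p.1 p.2
  have hab : twoMinor M (0, 0) (0, 1) = 0 := by simp only [twoMinor, M]; linear_combination -h3
  have hac : twoMinor M (0, 0) (1, 0) = 0 := by simp only [twoMinor, M]; linear_combination -h6
  have hbd : twoMinor M (0, 1) (1, 1) = 0 := by simp only [twoMinor, M]; linear_combination -h5
  have hcd : twoMinor M (1, 0) (1, 1) = 0 := by simp only [twoMinor, M]; linear_combination -h4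
  have hghz : (twoMinor M (0, 0) (1, 1) + twoMinor M (0, 1) (1, 0)) ^ 2
      - 4 * twoMinor M (0, 0) (1, 0) * twoMinor M (0, 1) (1, 1) = 0 := by
    simp only [twoMinor, M]; linear_combination hpoly
  obtain ⟨had, hbc⟩ := twoMinor_eq_zero_of_ghz_eq_zero M hghz hab hac
  obtain ⟨u, w, huw⟩ := exists_mul_of_forall_twoMinor_eq_zero
    (forall_twoMinor_eq_zero_of_pairs hab hac had hbc hbd hcd)
  exact Or.inl ⟨u, fun j k => w (j, k), fun i j k => huw i (j, k)⟩

/-- If the GHZ polynomial of a ternary signature vanishes and all six W-type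
inequalities fail (are equalities), then the signature is not genuinely entangled:
it factors with a unary tensor factor in some position.
Coefficients: ψ i j k is the coefficient of |ijk⟩, so a₀ = ψ 0 0 0, ..., a₇ = ψ 1 1 1. -/
theorem not_genuinely_entangled_of_conditions (ψ : Fin 2 → Fin 2 → Fin 2 → ℂ)
    (hpoly : (ψ 0 0 0 * ψ 1 1 1 - ψ 0 1 0 * ψ 1 0 1 + ψ 0 0 1 * ψ 1 1 0 - ψ 0 1 1 * ψ 1 0 0) ^ 2
      - 4 * (ψ 0 1 0 * ψ 1 0 0 - ψ 0 0 0 * ψ 1 1 0) * (ψ 0 1 1 * ψ 1 0 1 - ψ 0 0 1 * ψ 1 1 1) = 0)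
    (h1 : ψ 0 0 0 * ψ 0 1 1 = ψ 0 0 1 * ψ 0 1 0)
    (h2 : ψ 1 0 1 * ψ 1 1 0 = ψ 1 0 0 * ψ 1 1 1)
    (h3 : ψ 0 0 1 * ψ 1 0 0 = ψ 0 0 0 * ψ 1 0 1)
    (h4 : ψ 0 1 1 * ψ 1 1 0 = ψ 0 1 0 * ψ 1 1 1)
    (h5 : ψ 0 1 1 * ψ 1 0 1 = ψ 0 0 1 * ψ 1 1 1)
    (h6 : ψ 0 1 0 * ψ 1 0 0 = ψ 0 0 0 * ψ 1 1 0) :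
    (∃ (u : Fin 2 → ℂ) (w : Fin 2 → Fin 2 → ℂ), ∀ i j k, ψ i j k = u i * w j k) ∨
    (∃ (u : Fin 2 → ℂ) (w : Fin 2 → Fin 2 → ℂ), ∀ i j k, ψ i j k = u j * w i k) ∨
    (∃ (u : Fin 2 → ℂ) (w : Fin 2 → Fin 2 → ℂ), ∀ i j k, ψ i j k = u k * w i j) :=
  not_genuinely_entangled_of_conditions_general ψ hpoly h3 h4 h5 h6
end

section
/- Let M be a 2×2 invertible complex matrix. If (M⁻¹)ᵀ ⊗ (M⁻¹)ᵀ applied to |00⟩ + |11⟩ equals c(|01⟩ + |10⟩) for some c ∈ ℂ, then M⁻¹ = K·D or M⁻¹ = K·X·D for some invertible diagonal 2×2 matrix D, where K = [[1,1],[i,−i]] and X = [[0,1],[1,0]]. -/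
open Matrix

/-- If (M⁻¹)ᵀ ⊗ (M⁻¹)ᵀ maps |00⟩ + |11⟩ to a scalar multiple of |01⟩ + |10⟩, then
M⁻¹ = K·D or M⁻¹ = K·X·D for some invertible diagonal matrix D,
where K = [[1,1],[i,−i]] and X = [[0,1],[1,0]]. -/
theorem Minv_is_KD_or_KXD (M : Matrix (Fin 2) (Fin 2) ℂ) (hM : M.det ≠ 0)
    (h : ∃ c : ℂ, ∀ i j : Fin 2,
      (∑ i' : Fin 2, ∑ j' : Fin 2,
        (M⁻¹)ᵀ i i' * (M⁻¹)ᵀ j j' * (if i' = j' then (1 : ℂ) else 0))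
      = c * (if i ≠ j then (1 : ℂ) else 0)) :
    ∃ d : Fin 2 → ℂ, d 0 ≠ 0 ∧ d 1 ≠ 0 ∧
      (M⁻¹ = (!![1, 1; Complex.I, -Complex.I] : Matrix (Fin 2) (Fin 2) ℂ) * Matrix.diagonal d ∨
       M⁻¹ = (!![1, 1; Complex.I, -Complex.I] : Matrix (Fin 2) (Fin 2) ℂ) *
          (!![0, 1; 1, 0] : Matrix (Fin 2) (Fin 2) ℂ) * Matrix.diagonal d) := by
  obtain ⟨c, hc⟩ := h
  set a := M⁻¹ 0 0 with ha
  set b := M⁻¹ 0 1 with hb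
  set p := M⁻¹ 1 0 with hp
  set q := M⁻¹ 1 1 with hq
  have e00 := hc 0 0
  have e11 := hc 1 1
  simp [Fin.sum_univ_two, transpose_apply, ← ha, ← hb, ← hp, ← hq] at e00 e11
  have hdet : a * q - b * p ≠ 0 := by
    have : IsUnit (M⁻¹.det) :=
      Matrix.isUnit_nonsing_inv_det M (isUnit_iff_ne_zero.mpr hM)
    have h2 := this.ne_zero
    rwa [Matrix.det_fin_two] at h2
  have f1 : (p - Complex.I * a) * (p + Complex.I * a) = 0 := by
    linear_combination e00 - a ^ 2 * Complex.I_sq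
  have f2 : (q - Complex.I * b) * (q + Complex.I * b) = 0 := by
    linear_combination e11 - b ^ 2 * Complex.I_sq
  have hext : ∀ a' b' p' q' : ℂ, a = a' → b = b' → p = p' → q = q' →
      M⁻¹ = !![a', b'; p', q'] := by
    rintro a' b' p' q' rfl rfl rfl rfl
    ext i j
    fin_cases i <;> fin_cases j <;> simp [← ha, ← hb, ← hp, ← hq]
  rcases mul_eq_zero.mp f1 with h1 | h1 <;> rcases mul_eq_zero.mp f2 with h2 | h2
  · -- p = I a, q = I b : det = 0, contradiction
    exfalso; apply hdet; linear_combination a * h2 - b * h1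
  · -- p = I a, q = -I b : K case, d = (a, b)
    refine ⟨![a, b], ?_, ?_, Or.inl ?_⟩
    · intro h0; apply hdet
      simp at h0
      rw [h0] at h1 ⊢; simp at h1; rw [h1]; ring
    · intro h0; apply hdet
      simp at h0
      rw [h0] at h2 ⊢; simp at h2; rw [h2]; ring
    · rw [hext a b (Complex.I * a) (-(Complex.I * b))
        rfl rfl (by linear_combination h1) (by linear_combination h2)]
      ext i j
      fin_cases i <;> fin_cases j <;>
        simp [Matrix.mul_apply, Fin.sum_univ_two, Matrix.diagonal]
  · -- p = -I a, q = I b : KX case, d = (a, b)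
    refine ⟨![a, b], ?_, ?_, Or.inr ?_⟩
    · intro h0; apply hdet
      simp at h0
      rw [h0] at h1 ⊢; simp at h1; rw [h1]; ring
    · intro h0; apply hdet
      simp at h0
      rw [h0] at h2 ⊢; simp at h2; rw [h2]; ring
    · rw [hext a b (-(Complex.I * a)) (Complex.I * b)
        rfl rfl (by linear_combination h1) (by linear_combination h2)]
      ext i j
      fin_cases i <;> fin_cases j <;>
        simp [Matrix.mul_apply, Fin.sum_univ_two, Matrix.diagonal]
  · -- p = -I a, q = -I b : det = 0, contradiction
    exfalso; apply hdet; linear_combination a * h2 - b * h1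
end
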